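/- The graph H_{1,2} (two disjoint countably infinite complete graphs joined by a perfect matching) is ≥5-homogeneous: every isomorphism between finite induced subgraphs of size at least 5 extends to an automorphism. Moreover, H_{1,2} is 1-homogeneous but not 2-homogeneous. -/

import Mathlib

open SimpleGraph

/-- `M` is `n`-homogeneous: every isomorphism between induced subgraphs on
finite vertex sets of size `n` extends to an automorphism of `M`. -/
def IsNHom {V : Type*} (M : SimpleGraph V) (n : ℕ) : Prop :=
  ∀ (s t : Set V), s.Finite → t.Finite → s.ncard = n → t.ncard = n →
    ∀ f : M.induce s ≃g M.induce t, ∃ g : M ≃g M, ∀ x : s, g x.val = (f x).val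

/-- `M` is `≥k`-homogeneous: `n`-homogeneous for all `n ≥ k`. -/
def GeqHom {V : Type*} (M : SimpleGraph V) (k : ℕ) : Prop :=
  ∀ n, k ≤ n → IsNHom M n

/-- `M` is homogeneous: `n`-homogeneous for all `n`. -/
def IsHomogeneous {V : Type*} (M : SimpleGraph V) : Prop :=
  ∀ n, IsNHom M n

/-- The countably infinite complete graph embeds into `M` as an induced subgraph. -/
def HasKInf {V : Type*} (M : SimpleGraph V) : Prop :=
  Nonempty ((⊤ : SimpleGraph ℕ) ↪g M)

/-- `a` and `b` lie in the same orbit of vertices under `Aut(M)`. -/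
def SameOrbit {V : Type*} (M : SimpleGraph V) (a b : V) : Prop :=
  ∃ g : M ≃g M, g a = b

/-- `s` is an orbit of vertices under `Aut(M)`. -/
def IsOrbit {V : Type*} (M : SimpleGraph V) (s : Set V) : Prop :=
  ∃ a, s = {b | SameOrbit M a b}

/-- The ordered pairs `(a,b)` and `(c,d)` lie in the same orbit under `Aut(M)`. -/
def SamePairOrbit {V : Type*} (M : SimpleGraph V) (a b c d : V) : Prop :=
  ∃ g : M ≃g M, g a = c ∧ g b = d

/-- `a` and `b` lie in a common induced copy of `K_∞`. -/
def InCommonKInf {V : Type*} (M : SimpleGraph V) (a b : V) : Prop :=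
  ∃ f : (⊤ : SimpleGraph ℕ) ↪g M, a ∈ Set.range f ∧ b ∈ Set.range f

/-- The 2-orbit `q₁`: adjacent pairs lying in a common induced `K_∞`. -/
def Q1Rel {V : Type*} (M : SimpleGraph V) (a b : V) : Prop :=
  M.Adj a b ∧ InCommonKInf M a b

/-- The 2-orbit `q₂`: adjacent pairs not lying in a common induced `K_∞`. -/
def Q2Rel {V : Type*} (M : SimpleGraph V) (a b : V) : Prop :=
  M.Adj a b ∧ ¬ InCommonKInf M a b

/-- The 2-orbit `p₁`: non-adjacent pairs `(a,b)` such that `b` is adjacent to at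
most `k-1` vertices of any induced `K_∞` containing `a`. -/
def P1Rel {V : Type*} (M : SimpleGraph V) (k : ℕ) (a b : V) : Prop :=
  a ≠ b ∧ ¬ M.Adj a b ∧
    ∀ f : (⊤ : SimpleGraph ℕ) ↪g M, a ∈ Set.range f →
      {c | c ∈ Set.range f ∧ M.Adj b c}.Finite ∧
      {c | c ∈ Set.range f ∧ M.Adj b c}.ncard ≤ k - 1

/-- The 2-orbit `p₂`: the remaining non-adjacent pairs of distinct vertices. -/
def P2Rel {V : Type*} (M : SimpleGraph V) (k : ℕ) (a b : V) : Prop :=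
  a ≠ b ∧ ¬ M.Adj a b ∧ ¬ P1Rel M k a b

/-- The graph `G_t` on `ℤ × {1,…,t}`, with `(a,i)` adjacent to `(b,j)` iff `a ≠ b`. -/
def Gt (t : ℕ) : SimpleGraph (ℤ × Fin t) where
  Adj x y := x.1 ≠ y.1
  symm := ⟨fun _ _ h => Ne.symm h⟩
  loopless := ⟨fun _ h => h rfl⟩

/-- The graph `H_{t,2}`: two copies of `G_t`, with `(a,i)` in the first copy
adjacent to `(b,j)` in the second copy iff `a = b`. -/
def Ht2 (t : ℕ) : SimpleGraph ((ℤ × Fin t) ⊕ (ℤ × Fin t)) where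
  Adj x y := match x, y with
    | .inl a, .inl b => a.1 ≠ b.1
    | .inr a, .inr b => a.1 ≠ b.1
    | .inl a, .inr b => a.1 = b.1
    | .inr a, .inl b => a.1 = b.1
  symm := by
    refine ⟨?_⟩
    rintro (a | a) (b | b) h <;> simp_all <;> omega
  loopless := by
    refine ⟨?_⟩
    rintro (a | a) h <;> exact h rfl

/-- The graph `H_{1,2}`: two disjoint copies of `K_∞` joined by a perfect matching. -/
def H12 : SimpleGraph (ℤ × Fin 2) where
  Adj x y := (x.2 = y.2 ∧ x.1 ≠ y.1) ∨ (x.1 = y.1 ∧ x.2 ≠ y.2)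
  symm := by
    refine ⟨?_⟩
    rintro x y (⟨h1, h2⟩ | ⟨h1, h2⟩)
    · exact Or.inl ⟨h1.symm, h2.symm⟩
    · exact Or.inr ⟨h1.symm, h2.symm⟩
  loopless := by
    refine ⟨?_⟩
    rintro x (⟨_, h⟩ | ⟨_, h⟩) <;> exact h rfl

/-!
`H12` is the rook's graph on `ℤ × Fin 2`: two vertices are adjacent iff they are distinct and
share a coordinate. So a partial map on a finite set that preserves equality of first coordinates
and equality of second coordinates extends to an automorphism, a permutation of `ℤ` times one of
`Fin 2`; for an isomorphism of induced subgraphs, which preserves adjacency, the first of these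
conditions implies the second.

The matched pairs `(a, 0), (a, 1)` are antitwins: every other vertex is adjacent to exactly one of
them. Two vertices in a row are separated only by their two mates, so a set of at least five
vertices contains one that does not separate them: in an induced subgraph on five or more
vertices the matched pairs are exactly the adjacent antitwins, and isomorphisms preserve them.
On two vertices this fails: the edges `{(0,0), (1,0)}` and `{(0,0), (0,1)}` are isomorphic, but
only the second is a pair of antitwins in `H12`.
-/

namespace SimpleGraph

variable {V W : Type*} {G : SimpleGraph V} {G' : SimpleGraph W}

def IsAntitwin (G : SimpleGraph V) (u v : V) : Prop :=
  ∀ w, w ≠ u → w ≠ v → (G.Adj w u ↔ ¬ G.Adj w v)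

theorem Iso.isAntitwin_iff (e : G ≃g G') {u v : V} :
    G'.IsAntitwin (e u) (e v) ↔ G.IsAntitwin u v := by
  simp only [IsAntitwin, e.surjective.forall, e.injective.ne_iff, e.map_adj_iff]

theorem isAntitwin_induce_iff {s : Set V} {u v : s} :
    (G.induce s).IsAntitwin u v ↔ ∀ w ∈ s, w ≠ u → w ≠ v → (G.Adj w u ↔ ¬ G.Adj w v) := by
  simp [IsAntitwin, Subtype.forall, ← Subtype.coe_ne_coe]

def IsClique.induceIso {s t : Set V} (hs : G.IsClique s) (ht : G.IsClique t) (e : s ≃ t) :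
    G.induce s ≃g G.induce t where
  toEquiv := e
  map_rel_iff' := by
    rw [← induce_eq_top] at hs ht
    simp [hs, ht]

@[simp]
theorem IsClique.induceIso_apply {s t : Set V} (hs : G.IsClique s) (ht : G.IsClique t)
    (e : s ≃ t) (u : s) : hs.induceIso ht e u = e u := rfl

end SimpleGraph

namespace Equiv.Perm

theorem exists_extend_of_finite {α : Type*} {s : Set α} (hs : s.Finite) (f : s ↪ α) :
    ∃ σ : Perm α, ∀ x : s, σ x = f x := by
  cases finite_or_infinite α
  · exact Cardinal.extend_function_finite f ⟨Equiv.refl α⟩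
  · exact Cardinal.extend_function_of_lt f (hs.lt_aleph0.trans_le (Cardinal.aleph0_le_mk α))
      ⟨Equiv.refl α⟩

theorem exists_apply_comp_eq_of_finite {α γ : Type*} {s : Set γ} (hs : s.Finite) (p : γ → α)
    (φ : s → α) (h : ∀ u v : s, p u = p v ↔ φ u = φ v) :
    ∃ σ : Perm α, ∀ u : s, σ (p u) = φ u := by
  choose lift hlift using fun x : p '' s => x.2
  let f : p '' s ↪ α :=
    ⟨fun x => φ ⟨lift x, (hlift x).1⟩, fun x y hxy => Subtype.ext <| by
      rw [← (hlift x).2, ← (hlift y).2]; exact (h _ _).2 hxy⟩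
  obtain ⟨σ, hσ⟩ := exists_extend_of_finite (hs.image p) f
  refine ⟨σ, fun u => ?_⟩
  rw [hσ ⟨p u, u.1, u.2, rfl⟩]
  exact (h _ _).1 (hlift ⟨p u, _⟩).2

end Equiv.Perm

namespace H12

theorem adj_iff {x y : ℤ × Fin 2} : H12.Adj x y ↔ x ≠ y ∧ (x.1 = y.1 ∨ x.2 = y.2) := by
  simp only [H12, ne_eq, Prod.ext_iff]
  tauto

theorem snd_eq_iff {x y : ℤ × Fin 2} : x.2 = y.2 ↔ x = y ∨ (H12.Adj x y ∧ x.1 ≠ y.1) := by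
  rw [adj_iff, Prod.ext_iff]
  tauto

def ofPerms (σ : Equiv.Perm ℤ) (τ : Equiv.Perm (Fin 2)) : H12 ≃g H12 where
  toEquiv := σ.prodCongr τ
  map_rel_iff' := by
    simp [adj_iff, Prod.ext_iff, σ.injective.eq_iff, τ.injective.eq_iff]

theorem exists_aut_extending {s t : Set (ℤ × Fin 2)} (hs : s.Finite)
    (f : H12.induce s ≃g H12.induce t) (hf : ∀ u v : s, u.1.1 = v.1.1 ↔ (f u).1.1 = (f v).1.1) :
    ∃ g : H12 ≃g H12, ∀ x : s, g x = f x := by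
  have hsnd : ∀ u v : s, u.1.2 = v.1.2 ↔ (f u).1.2 = (f v).1.2 := by
    intro u v
    rw [snd_eq_iff, snd_eq_iff, Subtype.coe_inj, Subtype.coe_inj, f.injective.eq_iff.symm,
      ne_eq, ne_eq, hf u v]
    exact or_congr_right (and_congr_left' f.map_adj_iff.symm)
  obtain ⟨σ, hσ⟩ := Equiv.Perm.exists_apply_comp_eq_of_finite hs Prod.fst _ hf
  obtain ⟨τ, hτ⟩ := Equiv.Perm.exists_apply_comp_eq_of_finite hs Prod.snd _ hsnd
  exact ⟨ofPerms σ τ, fun x => Prod.ext (hσ x) (hτ x)⟩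

def mate (x : ℤ × Fin 2) : ℤ × Fin 2 := (x.1, x.2 + 1)

theorem isAntitwin_of_fst_eq {x y : ℤ × Fin 2} (hne : x ≠ y) (h : x.1 = y.1) :
    H12.IsAntitwin x y := by
  intro w hwx hwy
  simp only [adj_iff, ne_eq, hwx, hwy, not_false_eq_true, true_and]
  simp only [ne_eq, Prod.ext_iff] at hne hwx hwy
  omega

theorem adj_iff_adj_of_snd_eq {x y w : ℤ × Fin 2} (h : x.2 = y.2)
    (hw : w ∉ ({x, y, mate x, mate y} : Set (ℤ × Fin 2))) : H12.Adj w x ↔ H12.Adj w y := by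
  simp only [Set.mem_insert_iff, Set.mem_singleton_iff, not_or, mate, Prod.ext_iff] at hw
  simp only [adj_iff, ne_eq, Prod.ext_iff]
  omega

theorem fst_eq_iff_of_five_le {s : Set (ℤ × Fin 2)} (h5 : 5 ≤ s.ncard) (u v : s) :
    u.1.1 = v.1.1 ↔ u = v ∨ ((H12.induce s).Adj u v ∧ (H12.induce s).IsAntitwin u v) := by
  rcases eq_or_ne u v with rfl | huv
  · simp
  have huv' : (u : ℤ × Fin 2) ≠ v := Subtype.coe_ne_coe.mpr huv
  rw [comap_adj, isAntitwin_induce_iff]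
  simp only [huv, false_or, Function.Embedding.subtype_apply]
  constructor
  · intro h
    exact ⟨adj_iff.2 ⟨huv', Or.inl h⟩, fun w _ => isAntitwin_of_fst_eq huv' h w⟩
  · rintro ⟨hadj, hanti⟩
    by_contra hfst
    have hsnd : u.1.2 = v.1.2 := (adj_iff.1 hadj).2.resolve_left hfst
    have h4 : ({u.1, v.1, mate u, mate v} : Set (ℤ × Fin 2)).ncard < s.ncard := by
      grind [Set.ncard_insert_le, Set.ncard_singleton]
    obtain ⟨w, hws, hw⟩ := Set.exists_mem_notMem_of_ncard_lt_ncard h4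
    have hwu : w ≠ u := by rintro rfl; simp at hw
    have hwv : w ≠ v := by rintro rfl; simp at hw
    exact iff_not_self ((adj_iff_adj_of_snd_eq hsnd hw).symm.trans (hanti w hws hwu hwv))

theorem geqHom_five : GeqHom H12 5 := by
  intro n hn s t hs _ hsn htn f
  refine exists_aut_extending hs f fun u v => ?_
  rw [fst_eq_iff_of_five_le (hsn ▸ hn), fst_eq_iff_of_five_le (htn ▸ hn), f.injective.eq_iff,
    f.map_adj_iff, f.isAntitwin_iff]

theorem isNHom_one : IsNHom H12 1 := by
  intro s t hs _ hsn _ f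
  obtain ⟨a, rfl⟩ := Set.ncard_eq_one.mp hsn
  exact exists_aut_extending hs f fun u v => by simp [Subsingleton.elim u v]

theorem not_isNHom_two : ¬ IsNHom H12 2 := by
  intro h
  let ψ := Equiv.swap ((1 : ℤ), (0 : Fin 2)) (0, 1)
  let s : Set (ℤ × Fin 2) := {(0, 0), (1, 0)}
  have hs : H12.IsClique s := isClique_pair.2 fun _ => adj_iff.2 ⟨by decide, by simp⟩
  have hψs : ψ '' s = {(0, 0), (0, 1)} := by
    simp [s, ψ, Set.image_pair, Equiv.swap_apply_of_ne_of_ne]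
  have ht : H12.IsClique (ψ '' s) :=
    hψs ▸ isClique_pair.2 fun _ => adj_iff.2 ⟨by decide, by simp⟩
  have hcard : s.ncard = 2 := Set.ncard_pair (by decide)
  obtain ⟨g, hg⟩ := h s (ψ '' s) (Set.toFinite _) (Set.toFinite _) hcard
    (by rw [Set.ncard_image_of_injective _ ψ.injective, hcard])
    (hs.induceIso ht (Equiv.Set.image ψ s ψ.injective))
  have h00 : g (0, 0) = (0, 0) :=
    (hg ⟨(0, 0), by simp [s]⟩).trans (by simp [ψ, Equiv.swap_apply_of_ne_of_ne])
  have h10 : g (1, 0) = (0, 1) := (hg ⟨(1, 0), by simp [s]⟩).trans (by simp [ψ])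
  have hanti : H12.IsAntitwin (g (0, 0)) (g (1, 0)) := by
    rw [h00, h10]
    exact isAntitwin_of_fst_eq (by decide) rfl
  rw [g.isAntitwin_iff] at hanti
  -- `(2, 0)` is adjacent to both `(0, 0)` and `(1, 0)`
  simpa [adj_iff] using hanti (2, 0) (by decide) (by decide)

end H12

theorem stmt17 :
    GeqHom H12 5 ∧ IsNHom H12 1 ∧ ¬ IsNHom H12 2 :=
  ⟨H12.geqHom_five, H12.isNHom_one, H12.not_isNHom_two⟩
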